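/- Let ω ∈ ℝ^d with positive components, Λ_ω = {k ∈ ℤ^d : k·ω = 0}, and let ν₁,…,ν_{d_ω} ∈ ℤ^d be a basis of the orthogonal complement Λ_ω^⊥ in ℝ^d. Write ω = Σ_n v_n ν_n with v = (v₁,…,v_{d_ω}) ∈ ℝ^{d_ω}. Then for every k ∈ ℤ^{d_ω} \ {0}, one has k · v ≠ 0. -/

import Mathlib

/-!
Let `A` be the integer matrix with rows `ν_n` and `G = A Aᵀ` its Gram matrix, whose determinant
is nonzero by linear independence. If `k · v = 0`, the integer vector `x = Aᵀ (adj G) k` lies in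
the span of the `ν_n` and satisfies `A x = (det G) k`, hence `x · ω = (det G) (k · v) = 0`. So `x`
is an integer vector orthogonal to `ω`, i.e. lies in `Λ_ω`, and also in `Λ_ω^⊥`; thus `x = 0`,
and `(det G) k = 0` forces `k = 0`. The adjugate clears the denominators of the rational solution
`c` of `G c = k`, for which `Aᵀ c` would play the role of `x`.
-/

open Finset Matrix
open scoped RealInnerProductSpace

section

variable {ι κ : Type*}

def intVec (x : κ → ℤ) : EuclideanSpace ℝ κ := WithLp.toLp 2 fun j => (x j : ℝ)

lemma intVec_eq_zero {x : κ → ℤ} : intVec x = 0 ↔ x = 0 := by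
  simp [intVec, funext_iff, WithLp.ext_iff]

lemma intVec_transpose_mulVec [Fintype ι] (ν : ι → κ → ℤ) (c : ι → ℤ) :
    intVec ((of ν)ᵀ *ᵥ c) = ∑ i, (c i : ℝ) • intVec (ν i) := by
  ext j
  simp [intVec, mulVec_transpose, vecMul, dotProduct]

lemma mulVec_transpose_mulVec_adjugate {R : Type*} [CommRing R] [Fintype ι] [Fintype κ]
    [DecidableEq ι] (A : Matrix ι κ R) (k : ι → R) :
    A *ᵥ (Aᵀ *ᵥ ((A * Aᵀ).adjugate *ᵥ k)) = (A * Aᵀ).det • k := by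
  rw [mulVec_mulVec, mulVec_mulVec, mul_adjugate, smul_mulVec, one_mulVec]

variable [Fintype κ]

lemma inner_intVec (x y : κ → ℤ) : ⟪intVec x, intVec y⟫ = ((x ⬝ᵥ y : ℤ) : ℝ) := by
  simp [intVec, PiLp.inner_apply, dotProduct, mul_comm]

lemma map_mul_transpose_eq_gram [Fintype ι] (ν : ι → κ → ℤ) :
    (of ν * (of ν)ᵀ).map (Int.cast : ℤ → ℝ) = gram ℝ fun i => intVec (ν i) := by
  ext i j
  simp [inner_intVec, mul_apply, dotProduct]

lemma det_mul_transpose_ne_zero [Fintype ι] [DecidableEq ι] (ν : ι → κ → ℤ)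
    (h : LinearIndependent ℝ fun i => intVec (ν i)) : (of ν * (of ν)ᵀ).det ≠ 0 := by
  have hgram := det_gram_ne_zero_iff_linearIndependent.mpr h
  rw [← map_mul_transpose_eq_gram, ← Int.cast_det] at hgram
  exact_mod_cast hgram

lemma sum_mul_eq_sum_mulVec_mul [Fintype ι] {ω : EuclideanSpace ℝ κ} {ν : ι → κ → ℤ}
    {v : ι → ℝ} (hv : ω = ∑ i, v i • intVec (ν i)) (x : κ → ℤ) :
    ∑ j, (x j : ℝ) * ω j = ∑ i, ((of ν *ᵥ x) i : ℝ) * v i := by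
  subst hv
  simp only [WithLp.ofLp_sum, WithLp.ofLp_smul, Finset.sum_apply, Pi.smul_apply, intVec,
    smul_eq_mul, mulVec, dotProduct, of_apply, Int.cast_sum, Int.cast_mul, mul_sum,
    sum_mul]
  rw [sum_comm]
  exact sum_congr rfl fun _ _ => sum_congr rfl fun _ _ => by ring

lemma eq_zero_of_intVec_mem_orthogonal (ω : EuclideanSpace ℝ κ) {x : κ → ℤ}
    (hxω : ∑ j, (x j : ℝ) * ω j = 0)
    (hx : intVec x ∈ (Submodule.span ℝ {y : EuclideanSpace ℝ κ |
      ∃ k : κ → ℤ, (∀ j, y j = (k j : ℝ)) ∧ ∑ j, (k j : ℝ) * ω j = 0})ᗮ) :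
    x = 0 :=
  intVec_eq_zero.mp <| Submodule.disjoint_def.mp (Submodule.orthogonal_disjoint _) _
    (Submodule.subset_span (by exact ⟨x, fun _ => rfl, hxω⟩)) hx

end

theorem stmt_1_general (d m : ℕ) (ω : EuclideanSpace ℝ (Fin d))
    (ν : Fin m → Fin d → ℤ)
    (hindep : LinearIndependent ℝ
      (fun n => (WithLp.toLp 2 (fun j => (ν n j : ℝ)) : EuclideanSpace ℝ (Fin d))))
    (hspan : Submodule.span ℝ
        (Set.range fun n => (WithLp.toLp 2 (fun j => (ν n j : ℝ)) : EuclideanSpace ℝ (Fin d)))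
      = (Submodule.span ℝ
          {x : EuclideanSpace ℝ (Fin d) |
            ∃ k : Fin d → ℤ, (∀ j, x j = (k j : ℝ)) ∧ ∑ j, (k j : ℝ) * ω j = 0})ᗮ)
    (v : Fin m → ℝ)
    (hv : ω = ∑ n, v n • (WithLp.toLp 2 (fun j => (ν n j : ℝ)) : EuclideanSpace ℝ (Fin d)))
    (k : Fin m → ℤ) (hk : k ≠ 0) :
    ∑ n, (k n : ℝ) * v n ≠ 0 := by
  intro hkv
  set A := of ν
  set x := Aᵀ *ᵥ ((A * Aᵀ).adjugate *ᵥ k)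
  have hAx : A *ᵥ x = (A * Aᵀ).det • k := mulVec_transpose_mulVec_adjugate A k
  have hxω : ∑ j, (x j : ℝ) * ω j = 0 := by
    rw [sum_mul_eq_sum_mulVec_mul hv, hAx]
    simp [mul_assoc, ← mul_sum, hkv]
  have hx : intVec x ∈ Submodule.span ℝ (Set.range fun n => intVec (ν n)) := by
    rw [intVec_transpose_mulVec]
    exact Submodule.mem_span_range_iff_exists_fun ℝ |>.mpr ⟨_, rfl⟩
  rw [eq_zero_of_intVec_mem_orthogonal ω hxω (hspan.le hx), mulVec_zero, eq_comm,
    smul_eq_zero] at hAx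
  exact hk (hAx.resolve_left (det_mul_transpose_ne_zero ν hindep))

/-- Let `ω ∈ ℝ^d` have positive components, `Λ_ω = {k ∈ ℤ^d : k·ω = 0}`, and let
`ν₁, …, ν_{d_ω} ∈ ℤ^d` be a basis of the orthogonal complement `Λ_ω^⊥` in `ℝ^d`.
If `ω = Σ_n v_n ν_n`, then `k · v ≠ 0` for every nonzero `k ∈ ℤ^{d_ω}`. -/
theorem stmt_1 (d m : ℕ) (ω : EuclideanSpace ℝ (Fin d)) (hω : ∀ j, 0 < ω j)
    (ν : Fin m → Fin d → ℤ)
    (hindep : LinearIndependent ℝ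
      (fun n => (WithLp.toLp 2 (fun j => (ν n j : ℝ)) : EuclideanSpace ℝ (Fin d))))
    (hspan : Submodule.span ℝ
        (Set.range fun n => (WithLp.toLp 2 (fun j => (ν n j : ℝ)) : EuclideanSpace ℝ (Fin d)))
      = (Submodule.span ℝ
          {x : EuclideanSpace ℝ (Fin d) |
            ∃ k : Fin d → ℤ, (∀ j, x j = (k j : ℝ)) ∧ ∑ j, (k j : ℝ) * ω j = 0})ᗮ)
    (v : Fin m → ℝ)
    (hv : ω = ∑ n, v n • (WithLp.toLp 2 (fun j => (ν n j : ℝ)) : EuclideanSpace ℝ (Fin d)))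
    (k : Fin m → ℤ) (hk : k ≠ 0) :
    ∑ n, (k n : ℝ) * v n ≠ 0 :=
  stmt_1_general d m ω ν hindep hspan v hv k hk
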